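/- arXiv:2112.03684 — 2 statements merged into one kernel-verified Lean document; each statement's English description precedes it below -/
import Mathlib

section
/- Let p, k, l be positive integers with 1/l = 1/2 - 1/p - 1/k. The group with presentation ⟨J, P, R₁, R₂ | J³ = R₁^p = R₂^p = (P⁻¹J)^k = (R₂R₁J)^l = 1, R₂ = P R₁ P⁻¹, R₂ = J R₁ J⁻¹, P = R₁R₂⟩ is isomorphic to the group with presentation ⟨J, R₁ | J³ = R₁^p = (R₁J)^{2k} = (R₁J²)^{2l} = 1, R₁ J R₁ J² R₁ J R₁^{p-1} J² R₁^{p-1} J R₁^{p-1} J² = 1⟩, via the map determined by sending J to J, R₁ to R₁, R₂ to J R₁ J⁻¹ and P to R₁ · J R₁ J⁻¹. -/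
/-- Generators of the two-generator presentations of the 3-fold Deligne-Mostow lattices. -/
inductive Gen2 | J | R

/-- Generators of the four-generator presentations of the 3-fold Deligne-Mostow lattices. -/
inductive Gen4 | J | P | R₁ | R₂

namespace FourGen

/-- Shorthand for the free group generators. -/
def J : FreeGroup Gen4 := FreeGroup.of Gen4.J
def P : FreeGroup Gen4 := FreeGroup.of Gen4.P
def R₁ : FreeGroup Gen4 := FreeGroup.of Gen4.R₁
def R₂ : FreeGroup Gen4 := FreeGroup.of Gen4.R₂

end FourGen

/-- The four-generator presentation of the type two Deligne-Mostow lattice: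
`J³ = R₁ᵖ = R₂ᵖ = (P⁻¹J)ᵏ = (R₂R₁J)ˡ = 1`, `R₂ = PR₁P⁻¹`, `R₂ = JR₁J⁻¹`, `P = R₁R₂`. -/
def rels4Two (p k l : ℕ) : Set (FreeGroup Gen4) :=
  { FourGen.J ^ 3,
    FourGen.R₁ ^ p,
    FourGen.R₂ ^ p,
    (FourGen.P⁻¹ * FourGen.J) ^ k,
    (FourGen.R₂ * FourGen.R₁ * FourGen.J) ^ l,
    FourGen.R₂ * (FourGen.P * FourGen.R₁ * FourGen.P⁻¹)⁻¹,
    FourGen.R₂ * (FourGen.J * FourGen.R₁ * FourGen.J⁻¹)⁻¹,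
    FourGen.P * (FourGen.R₁ * FourGen.R₂)⁻¹ }

/-- Relators of the two-generator presentation of type two Deligne-Mostow lattices. -/
def relsTwo (p k l : ℕ) : Set (FreeGroup Gen2) :=
  { (FreeGroup.of Gen2.J) ^ 3, (FreeGroup.of Gen2.R) ^ p,
    (FreeGroup.of Gen2.R * FreeGroup.of Gen2.J) ^ (2 * k),
    (FreeGroup.of Gen2.R * (FreeGroup.of Gen2.J) ^ 2) ^ (2 * l),
    FreeGroup.of Gen2.R * FreeGroup.of Gen2.J * FreeGroup.of Gen2.R *
      (FreeGroup.of Gen2.J) ^ 2 * FreeGroup.of Gen2.R * FreeGroup.of Gen2.J *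
      (FreeGroup.of Gen2.R) ^ (p - 1) * (FreeGroup.of Gen2.J) ^ 2 *
      (FreeGroup.of Gen2.R) ^ (p - 1) * FreeGroup.of Gen2.J *
      (FreeGroup.of Gen2.R) ^ (p - 1) * (FreeGroup.of Gen2.J) ^ 2 }

section AuxGroup

variable {G : Type*} [Group G]

private theorem cube_aux {j : G} (hj : j ^ 3 = 1) : j⁻¹ = j * j := by
  apply inv_eq_of_mul_eq_one_right
  have : j * (j * j) = j ^ 3 := by rw [pow_succ, pow_succ, pow_one, mul_assoc]
  rw [this, hj]

private theorem cube_cancel {j : G} (hj : j ^ 3 = 1) (x : G) : j * (j * (j * x)) = x := by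
  have : j * (j * (j * x)) = j ^ 3 * x := by
    rw [pow_succ, pow_succ, pow_one, mul_assoc, mul_assoc]
  rw [this, hj, one_mul]

private theorem sq_eq_inv {j : G} (hj : j ^ 3 = 1) : j ^ 2 = j⁻¹ := by
  rw [pow_two, ← cube_aux hj]

private theorem pow_pred {r : G} {p : ℕ} (hp : 0 < p) (hr : r ^ p = 1) :
    r ^ (p - 1) = r⁻¹ := by
  apply eq_inv_of_mul_eq_one_left
  rw [← pow_succ, Nat.sub_add_cancel hp, hr]

private theorem L1 {j r : G} (hj : j ^ 3 = 1) (k : ℕ) :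
    ((r * (j * r * j⁻¹))⁻¹ * j) ^ k = (j * j) * ((r * j) ^ (2 * k))⁻¹ * (j * j)⁻¹ := by
  have e : (r * (j * r * j⁻¹))⁻¹ * j = (j * j) * ((r * j) ^ 2)⁻¹ * (j * j)⁻¹ := by
    simp [cube_aux hj, mul_assoc, cube_cancel hj, pow_two, mul_inv_rev]
  rw [e, conj_pow, inv_pow, ← pow_mul]

private theorem L2 {j r : G} (hj : j ^ 3 = 1) (l : ℕ) :
    (j * r * j⁻¹ * r * j) ^ l = j * (r * j ^ 2) ^ (2 * l) * j⁻¹ := by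
  have e : j * r * j⁻¹ * r * j = j * ((r * j ^ 2) ^ 2) * j⁻¹ := by
    simp [cube_aux hj, mul_assoc, cube_cancel hj, pow_two, mul_inv_rev]
  rw [e, conj_pow, ← pow_mul]

private theorem L3 {j r : G} {p : ℕ} (hj : j ^ 3 = 1) (hp : 0 < p) (hr : r ^ p = 1) :
    r * j * r * j ^ 2 * r * j * r ^ (p - 1) * j ^ 2 * r ^ (p - 1) * j * r ^ (p - 1) * j ^ 2
      = r * (j * r * j⁻¹) * r * (r * (j * r * j⁻¹))⁻¹ * (j * r * j⁻¹)⁻¹ := by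
  rw [pow_pred hp hr, sq_eq_inv hj]
  simp [mul_assoc, mul_inv_rev]

private theorem conj_eq_one' {a x : G} (h : a * x * a⁻¹ = 1) : x = 1 := by
  have h1 : a * x = a := by rwa [mul_inv_eq_one] at h
  exact mul_left_cancel (a := a) (by rw [h1, mul_one])

private theorem conj_eq_one {a x : G} (h : a * x⁻¹ * a⁻¹ = 1) : x = 1 := by
  have := conj_eq_one' h
  rwa [inv_eq_one] at this

end AuxGroup

private theorem rel_one {α : Type*} {rels : Set (FreeGroup α)} {x : FreeGroup α} (h : x ∈ rels) :
    PresentedGroup.mk rels x = 1 :=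
  (QuotientGroup.eq_one_iff x).mpr (Subgroup.subset_normalClosure h)

private theorem mk_of {α : Type*} {rels : Set (FreeGroup α)} (x : α) :
    PresentedGroup.mk rels (FreeGroup.of x) = PresentedGroup.of x := rfl

/-- The image of the four generators in the two-generator group. -/
private def fmap4 (p k l : ℕ) : Gen4 → PresentedGroup (relsTwo p k l)
  | Gen4.J => PresentedGroup.of Gen2.J
  | Gen4.R₁ => PresentedGroup.of Gen2.R
  | Gen4.R₂ => PresentedGroup.of Gen2.J * PresentedGroup.of Gen2.R * (PresentedGroup.of Gen2.J)⁻¹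
  | Gen4.P => PresentedGroup.of Gen2.R *
      (PresentedGroup.of Gen2.J * PresentedGroup.of Gen2.R * (PresentedGroup.of Gen2.J)⁻¹)

/-- The image of the two generators in the four-generator group. -/
private def fmap2 (p k l : ℕ) : Gen2 → PresentedGroup (rels4Two p k l)
  | Gen2.J => PresentedGroup.of Gen4.J
  | Gen2.R => PresentedGroup.of Gen4.R₁


/-- The four-generator presentation of a type two 3-fold Deligne-Mostow lattice is isomorphic to
its two-generator presentation, via `J ↦ J`, `R₁ ↦ R₁`, `R₂ ↦ JR₁J⁻¹`, `P ↦ R₁·(JR₁J⁻¹)`. -/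
theorem typeTwo_presentations_isomorphic (p k l : ℕ) (hp : 0 < p) (hk : 0 < k) (hl : 0 < l)
    (hpkl : (1 : ℚ) / l = 1 / 2 - 1 / p - 1 / k) :
    letI rels4 := rels4Two p k l
    letI rels2 := relsTwo p k l
    ∃ e : PresentedGroup rels4 ≃* PresentedGroup rels2,
      e (PresentedGroup.of Gen4.J) = PresentedGroup.of Gen2.J ∧
      e (PresentedGroup.of Gen4.R₁) = PresentedGroup.of Gen2.R ∧
      e (PresentedGroup.of Gen4.R₂) =
        PresentedGroup.of Gen2.J * PresentedGroup.of Gen2.R * (PresentedGroup.of Gen2.J)⁻¹ ∧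
      e (PresentedGroup.of Gen4.P) =
        PresentedGroup.of Gen2.R * (PresentedGroup.of Gen2.J * PresentedGroup.of Gen2.R * (PresentedGroup.of Gen2.J)⁻¹) := by
  -- relations in the two-generator group
  have hj3 : (PresentedGroup.of (rels := relsTwo p k l) Gen2.J) ^ 3 = 1 := by
    have := rel_one (rels := relsTwo p k l) (x := (FreeGroup.of Gen2.J) ^ 3)
      (by simp [relsTwo])
    simpa [mk_of] using this
  have hrp : (PresentedGroup.of (rels := relsTwo p k l) Gen2.R) ^ p = 1 := by
    have := rel_one (rels := relsTwo p k l) (x := (FreeGroup.of Gen2.R) ^ p) (by simp [relsTwo])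
    simpa [mk_of] using this
  have h2k : (PresentedGroup.of (rels := relsTwo p k l) Gen2.R *
      PresentedGroup.of Gen2.J) ^ (2 * k) = 1 := by
    have := rel_one (rels := relsTwo p k l)
      (x := (FreeGroup.of Gen2.R * FreeGroup.of Gen2.J) ^ (2 * k)) (by simp [relsTwo])
    simpa [mk_of] using this
  have h2l : (PresentedGroup.of (rels := relsTwo p k l) Gen2.R *
      (PresentedGroup.of Gen2.J) ^ 2) ^ (2 * l) = 1 := by
    have := rel_one (rels := relsTwo p k l)
      (x := (FreeGroup.of Gen2.R * (FreeGroup.of Gen2.J) ^ 2) ^ (2 * l))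
      (by simp [relsTwo])
    simpa [mk_of] using this
  have hW : PresentedGroup.of (rels := relsTwo p k l) Gen2.R * PresentedGroup.of Gen2.J *
      PresentedGroup.of Gen2.R * (PresentedGroup.of Gen2.J) ^ 2 * PresentedGroup.of Gen2.R *
      PresentedGroup.of Gen2.J * (PresentedGroup.of Gen2.R) ^ (p - 1) *
      (PresentedGroup.of Gen2.J) ^ 2 * (PresentedGroup.of Gen2.R) ^ (p - 1) *
      PresentedGroup.of Gen2.J * (PresentedGroup.of Gen2.R) ^ (p - 1) *
      (PresentedGroup.of Gen2.J) ^ 2 = 1 := by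
    have := rel_one (rels := relsTwo p k l)
      (x := FreeGroup.of Gen2.R * FreeGroup.of Gen2.J * FreeGroup.of Gen2.R *
        (FreeGroup.of Gen2.J) ^ 2 * FreeGroup.of Gen2.R * FreeGroup.of Gen2.J *
        (FreeGroup.of Gen2.R) ^ (p - 1) * (FreeGroup.of Gen2.J) ^ 2 *
        (FreeGroup.of Gen2.R) ^ (p - 1) * FreeGroup.of Gen2.J *
        (FreeGroup.of Gen2.R) ^ (p - 1) * (FreeGroup.of Gen2.J) ^ 2)
      (by simp [relsTwo])
    simpa [mk_of] using this
  -- relations in the four-generator group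
  have hJ3 : (PresentedGroup.of (rels := rels4Two p k l) Gen4.J) ^ 3 = 1 := by
    have := rel_one (rels := rels4Two p k l) (x := FourGen.J ^ 3) (by simp [rels4Two])
    simpa [FourGen.J, mk_of] using this
  have hRp : (PresentedGroup.of (rels := rels4Two p k l) Gen4.R₁) ^ p = 1 := by
    have := rel_one (rels := rels4Two p k l) (x := FourGen.R₁ ^ p) (by simp [rels4Two])
    simpa [FourGen.R₁, mk_of] using this
  have hPk : ((PresentedGroup.of (rels := rels4Two p k l) Gen4.P)⁻¹ *
      PresentedGroup.of Gen4.J) ^ k = 1 := by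
    have := rel_one (rels := rels4Two p k l) (x := (FourGen.P⁻¹ * FourGen.J) ^ k)
      (by simp [rels4Two])
    simpa [FourGen.P, FourGen.J, mk_of] using this
  have hRl : (PresentedGroup.of (rels := rels4Two p k l) Gen4.R₂ *
      PresentedGroup.of Gen4.R₁ * PresentedGroup.of Gen4.J) ^ l = 1 := by
    have := rel_one (rels := rels4Two p k l) (x := (FourGen.R₂ * FourGen.R₁ * FourGen.J) ^ l)
      (by simp [rels4Two])
    simpa [FourGen.R₂, FourGen.R₁, FourGen.J, mk_of] using this
  have hR2 : PresentedGroup.of (rels := rels4Two p k l) Gen4.R₂ =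
      PresentedGroup.of Gen4.J * PresentedGroup.of Gen4.R₁ *
        (PresentedGroup.of Gen4.J)⁻¹ := by
    have := rel_one (rels := rels4Two p k l)
      (x := FourGen.R₂ * (FourGen.J * FourGen.R₁ * FourGen.J⁻¹)⁻¹)
      (by simp [rels4Two])
    simp only [FourGen.R₂, FourGen.J, FourGen.R₁, map_mul, map_inv, mk_of] at this
    rwa [mul_inv_eq_one] at this
  have hPRel : PresentedGroup.of (rels := rels4Two p k l) Gen4.R₂ =
      PresentedGroup.of Gen4.P * PresentedGroup.of Gen4.R₁ *
        (PresentedGroup.of Gen4.P)⁻¹ := by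
    have := rel_one (rels := rels4Two p k l)
      (x := FourGen.R₂ * (FourGen.P * FourGen.R₁ * FourGen.P⁻¹)⁻¹)
      (by simp [rels4Two])
    simp only [FourGen.R₂, FourGen.R₁, FourGen.P, map_mul, map_inv, mk_of] at this
    rwa [mul_inv_eq_one] at this
  have hPdef : PresentedGroup.of (rels := rels4Two p k l) Gen4.P =
      PresentedGroup.of Gen4.R₁ * (PresentedGroup.of Gen4.J * PresentedGroup.of Gen4.R₁ *
        (PresentedGroup.of Gen4.J)⁻¹) := by
    have := rel_one (rels := rels4Two p k l)
      (x := FourGen.P * (FourGen.R₁ * FourGen.R₂)⁻¹) (by simp [rels4Two])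
    simp only [FourGen.R₂, FourGen.R₁, FourGen.P, map_mul, map_inv, mk_of] at this
    rw [mul_inv_eq_one] at this
    rw [this, hR2]
  -- the relations hold for the images
  have hφ : ∀ x ∈ rels4Two p k l, FreeGroup.lift (fmap4 p k l) x = 1 := by
    intro x hx
    simp only [rels4Two, Set.mem_insert_iff, Set.mem_singleton_iff] at hx
    rcases hx with h | h | h | h | h | h | h | h <;> subst h <;>
      simp only [FourGen.J, FourGen.P, FourGen.R₁, FourGen.R₂, map_mul, map_inv, map_pow,
        FreeGroup.lift_apply_of, fmap4]
    · exact hj3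
    · exact hrp
    · rw [conj_pow, hrp, mul_one, mul_inv_cancel]
    · rw [L1 hj3, h2k, inv_one, mul_one, mul_inv_cancel]
    · rw [L2 hj3, h2l, mul_one, mul_inv_cancel]
    · rw [L3 hj3 hp hrp, mul_inv_eq_one] at hW
      rw [mul_inv_eq_one]
      exact hW.symm
    · exact mul_inv_cancel _
    · exact mul_inv_cancel _
  have hψ : ∀ x ∈ relsTwo p k l, FreeGroup.lift (fmap2 p k l) x = 1 := by
    intro x hx
    simp only [relsTwo, Set.mem_insert_iff, Set.mem_singleton_iff] at hx
    rcases hx with h | h | h | h | h <;> subst h <;>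
      simp only [map_mul, map_inv, map_pow, FreeGroup.lift_apply_of, fmap2]
    · exact hJ3
    · exact hRp
    · rw [hPdef, L1 hJ3] at hPk
      exact conj_eq_one hPk
    · rw [hR2, L2 hJ3] at hRl
      exact conj_eq_one' hRl
    · rw [L3 hJ3 hp hRp, mul_inv_eq_one]
      rw [hR2, hPdef] at hPRel
      exact hPRel.symm
  let φ : PresentedGroup (rels4Two p k l) →* PresentedGroup (relsTwo p k l) :=
    PresentedGroup.toGroup hφ
  let ψ : PresentedGroup (relsTwo p k l) →* PresentedGroup (rels4Two p k l) :=
    PresentedGroup.toGroup hψ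
  have hψφ : ψ.comp φ = MonoidHom.id _ := by
    ext x
    cases x <;>
      simp only [MonoidHom.comp_apply, MonoidHom.id_apply, φ, ψ,
        PresentedGroup.toGroup.of, fmap4, map_mul, map_inv, fmap2]
    · rw [hPdef]
    · rw [hR2]
  have hφψ : φ.comp ψ = MonoidHom.id _ := by
    ext x
    cases x <;>
      simp only [MonoidHom.comp_apply, MonoidHom.id_apply, φ, ψ,
        PresentedGroup.toGroup.of, fmap4, fmap2]
  refine ⟨MonoidHom.toMulEquiv φ ψ hψφ hφψ, ?_, ?_, ?_, ?_⟩ <;>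
    simp only [MonoidHom.toMulEquiv_apply, φ, PresentedGroup.toGroup.of, fmap4]
end

section
/- Let p, k, d be positive integers with 1/d = 1/2 - 3/p. The group with presentation ⟨J, P, R₁, R₂ | J³ = R₁^p = R₂^p = P^{3d} = (P⁻¹J)^k = 1, R₂ = P R₁ P⁻¹, R₂ = J R₁ J⁻¹, P = R₁R₂⟩ is isomorphic to the group with presentation ⟨J, R₁ | J³ = R₁^p = (R₁J)^{2k} = (R₁JR₁J²)^{3d} = 1, R₁ J R₁ J² R₁ J R₁^{p-1} J² R₁^{p-1} J R₁^{p-1} J² = 1⟩, via the map determined by sending J to J, R₁ to R₁, R₂ to J R₁ J⁻¹ and P to R₁ · J R₁ J⁻¹. -/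
/-- The four-generator presentation of the type three Deligne-Mostow lattice:
`J³ = R₁ᵖ = R₂ᵖ = P³ᵈ = (P⁻¹J)ᵏ = 1`, `R₂ = PR₁P⁻¹`, `R₂ = JR₁J⁻¹`, `P = R₁R₂`. -/
def rels4Three (p k d : ℕ) : Set (FreeGroup Gen4) :=
  { FourGen.J ^ 3,
    FourGen.R₁ ^ p,
    FourGen.R₂ ^ p,
    (FourGen.P⁻¹ * FourGen.J) ^ k,
    FourGen.P ^ (3 * d),
    FourGen.R₂ * (FourGen.P * FourGen.R₁ * FourGen.P⁻¹)⁻¹,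
    FourGen.R₂ * (FourGen.J * FourGen.R₁ * FourGen.J⁻¹)⁻¹,
    FourGen.P * (FourGen.R₁ * FourGen.R₂)⁻¹ }

/-- Relators of the two-generator presentation of type three Deligne-Mostow lattices. -/
def relsThree (p k d : ℕ) : Set (FreeGroup Gen2) :=
  { (FreeGroup.of Gen2.J) ^ 3, (FreeGroup.of Gen2.R) ^ p,
    (FreeGroup.of Gen2.R * FreeGroup.of Gen2.J) ^ (2 * k),
    (FreeGroup.of Gen2.R * FreeGroup.of Gen2.J * FreeGroup.of Gen2.R *
      (FreeGroup.of Gen2.J) ^ 2) ^ (3 * d),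
    FreeGroup.of Gen2.R * FreeGroup.of Gen2.J * FreeGroup.of Gen2.R *
      (FreeGroup.of Gen2.J) ^ 2 * FreeGroup.of Gen2.R * FreeGroup.of Gen2.J *
      (FreeGroup.of Gen2.R) ^ (p - 1) * (FreeGroup.of Gen2.J) ^ 2 *
      (FreeGroup.of Gen2.R) ^ (p - 1) * FreeGroup.of Gen2.J *
      (FreeGroup.of Gen2.R) ^ (p - 1) * (FreeGroup.of Gen2.J) ^ 2 }

lemma PresentedGroup.lift_of_eq_one {α : Type*} {rels : Set (FreeGroup α)} {r : FreeGroup α}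
    (hr : r ∈ rels) : FreeGroup.lift (PresentedGroup.of (rels := rels)) r = 1 := by
  rw [FreeGroup.ext_hom (FreeGroup.lift PresentedGroup.of) (PresentedGroup.mk rels)
    fun _ => FreeGroup.lift_apply_of]
  exact PresentedGroup.one_of_mem hr

section Relations

variable {G : Type*} [Group G]

lemma pow_sub_one_eq_inv_of_pow_eq_one {a : G} {n : ℕ} (hn : n ≠ 0) (h : a ^ n = 1) :
    a ^ (n - 1) = a⁻¹ :=
  eq_inv_of_mul_eq_one_left ((pow_sub_one_mul hn a).trans h)

lemma conj_pow_eq_one_iff {a b : G} {n : ℕ} : (a * b * a⁻¹) ^ n = 1 ↔ b ^ n = 1 := by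
  rw [conj_pow, conj_eq_one_iff]

/-- The relations of `relsThree p k d` at the images `j, r` of `J, R`. -/
structure SatisfiesRelsThree (p k d : ℕ) (j r : G) : Prop where
  pow_j : j ^ 3 = 1
  pow_r : r ^ p = 1
  pow_rj : (r * j) ^ (2 * k) = 1
  pow_rjrj : (r * j * r * j ^ 2) ^ (3 * d) = 1
  word : r * j * r * j ^ 2 * r * j * r ^ (p - 1) * j ^ 2 * r ^ (p - 1) * j * r ^ (p - 1) * j ^ 2 = 1

/-- The relations of `rels4Three p k d` at the images `j, q, r₁, r₂` of `J, P, R₁, R₂`. -/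
structure SatisfiesRels4Three (p k d : ℕ) (j q r₁ r₂ : G) : Prop where
  pow_j : j ^ 3 = 1
  pow_r₁ : r₁ ^ p = 1
  pow_r₂ : r₂ ^ p = 1
  pow_inv_mul : (q⁻¹ * j) ^ k = 1
  pow_q : q ^ (3 * d) = 1
  r₂_eq_conj_q : r₂ = q * r₁ * q⁻¹
  r₂_eq_conj_j : r₂ = j * r₁ * j⁻¹
  q_eq : q = r₁ * r₂

variable {p k d : ℕ}

lemma lift_relsThree_eq_one_iff (f : Gen2 → G) :
    (∀ w ∈ relsThree p k d, FreeGroup.lift f w = 1) ↔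
      SatisfiesRelsThree p k d (f Gen2.J) (f Gen2.R) := by
  simp only [relsThree, Set.forall_mem_insert, Set.mem_singleton_iff, forall_eq, map_mul,
    map_pow, FreeGroup.lift_apply_of]
  exact ⟨fun ⟨h₁, h₂, h₃, h₄, h₅⟩ => ⟨h₁, h₂, h₃, h₄, h₅⟩,
    fun ⟨h₁, h₂, h₃, h₄, h₅⟩ => ⟨h₁, h₂, h₃, h₄, h₅⟩⟩

lemma lift_rels4Three_eq_one_iff (f : Gen4 → G) :
    (∀ w ∈ rels4Three p k d, FreeGroup.lift f w = 1) ↔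
      SatisfiesRels4Three p k d (f Gen4.J) (f Gen4.P) (f Gen4.R₁) (f Gen4.R₂) := by
  simp only [rels4Three, FourGen.J, FourGen.P, FourGen.R₁, FourGen.R₂, Set.forall_mem_insert,
    Set.mem_singleton_iff, forall_eq, map_mul, map_pow, map_inv, FreeGroup.lift_apply_of,
    mul_inv_eq_one]
  exact ⟨fun ⟨h₁, h₂, h₃, h₄, h₅, h₆, h₇, h₈⟩ => ⟨h₁, h₂, h₃, h₄, h₅, h₆, h₇, h₈⟩,
    fun ⟨h₁, h₂, h₃, h₄, h₅, h₆, h₇, h₈⟩ => ⟨h₁, h₂, h₃, h₄, h₅, h₆, h₇, h₈⟩⟩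

section OrderThree

variable {j r : G}

lemma mul_conj_eq_of_pow_three (hj : j ^ 3 = 1) : r * (j * r * j⁻¹) = r * j * r * j ^ 2 := by
  rw [pow_sub_one_eq_inv_of_pow_eq_one three_ne_zero hj, mul_assoc r, mul_assoc r]

lemma mul_conj_inv_mul_eq_conj_of_pow_three (hj : j ^ 3 = 1) :
    (r * (j * r * j⁻¹))⁻¹ * j = j * r⁻¹ * ((r * j) ^ 2)⁻¹ * (j * r⁻¹)⁻¹ := by
  rw [pow_two]
  calc (r * (j * r * j⁻¹))⁻¹ * j
      = (j * r⁻¹ * j⁻¹ * r⁻¹) * j ^ 3 * (j * r⁻¹ * j⁻¹ * r⁻¹)⁻¹ *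
          (j * r⁻¹ * (r * j * (r * j))⁻¹ * (j * r⁻¹)⁻¹) := by group
    _ = j * r⁻¹ * (r * j * (r * j))⁻¹ * (j * r⁻¹)⁻¹ := by rw [hj]; group

lemma mul_conj_inv_mul_pow_eq_one_iff (hj : j ^ 3 = 1) :
    ((r * (j * r * j⁻¹))⁻¹ * j) ^ k = 1 ↔ (r * j) ^ (2 * k) = 1 := by
  rw [mul_conj_inv_mul_eq_conj_of_pow_three hj, conj_pow_eq_one_iff, inv_pow, inv_eq_one,
    ← pow_mul]

lemma word_eq_one_iff (hp : p ≠ 0) (hj : j ^ 3 = 1) (hr : r ^ p = 1) :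
    r * j * r * j ^ 2 * r * j * r ^ (p - 1) * j ^ 2 * r ^ (p - 1) * j * r ^ (p - 1) * j ^ 2 = 1 ↔
      j * r * j⁻¹ = (r * (j * r * j⁻¹)) * r * (r * (j * r * j⁻¹))⁻¹ := by
  rw [pow_sub_one_eq_inv_of_pow_eq_one hp hr, pow_sub_one_eq_inv_of_pow_eq_one three_ne_zero hj,
    show r * j * r * j⁻¹ * r * j * r⁻¹ * j⁻¹ * r⁻¹ * j * r⁻¹ * j⁻¹ =
      (r * (j * r * j⁻¹) * r * (r * (j * r * j⁻¹))⁻¹) * (j * r * j⁻¹)⁻¹ by group,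
    mul_inv_eq_one, eq_comm]

end OrderThree

theorem satisfiesRels4Three_iff (hp : p ≠ 0) {j r : G} :
    SatisfiesRels4Three p k d j (r * (j * r * j⁻¹)) r (j * r * j⁻¹) ↔
      SatisfiesRelsThree p k d j r := by
  constructor
  · intro h
    exact ⟨h.pow_j, h.pow_r₁, (mul_conj_inv_mul_pow_eq_one_iff h.pow_j).1 h.pow_inv_mul,
      mul_conj_eq_of_pow_three h.pow_j ▸ h.pow_q,
      (word_eq_one_iff hp h.pow_j h.pow_r₁).2 h.r₂_eq_conj_q⟩
  · intro h
    exact ⟨h.pow_j, h.pow_r, conj_pow_eq_one_iff.2 h.pow_r,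
      (mul_conj_inv_mul_pow_eq_one_iff h.pow_j).2 h.pow_rj,
      (mul_conj_eq_of_pow_three h.pow_j).symm ▸ h.pow_rjrj,
      (word_eq_one_iff hp h.pow_j h.pow_r).1 h.word, rfl, rfl⟩

theorem SatisfiesRels4Three.satisfiesRelsThree (hp : p ≠ 0) {j q r₁ r₂ : G}
    (h : SatisfiesRels4Three p k d j q r₁ r₂) : SatisfiesRelsThree p k d j r₁ := by
  obtain rfl := h.q_eq
  obtain rfl := h.r₂_eq_conj_j
  exact (satisfiesRels4Three_iff hp).1 h

end Relations

theorem typeThree_presentations_isomorphic_general (p k d : ℕ) (hp : 0 < p) :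
    letI rels4 := rels4Three p k d
    letI rels2 := relsThree p k d
    ∃ e : PresentedGroup rels4 ≃* PresentedGroup rels2,
      e (PresentedGroup.of Gen4.J) = PresentedGroup.of Gen2.J ∧
      e (PresentedGroup.of Gen4.R₁) = PresentedGroup.of Gen2.R ∧
      e (PresentedGroup.of Gen4.R₂) =
        PresentedGroup.of Gen2.J * PresentedGroup.of Gen2.R * (PresentedGroup.of Gen2.J)⁻¹ ∧
      e (PresentedGroup.of Gen4.P) =
        PresentedGroup.of Gen2.R * (PresentedGroup.of Gen2.J * PresentedGroup.of Gen2.R * (PresentedGroup.of Gen2.J)⁻¹) := by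
  let j := PresentedGroup.of (rels := relsThree p k d) Gen2.J
  let r := PresentedGroup.of (rels := relsThree p k d) Gen2.R
  have h₂ : SatisfiesRelsThree p k d j r :=
    (lift_relsThree_eq_one_iff PresentedGroup.of).1 fun _ => PresentedGroup.lift_of_eq_one
  have h₄ : SatisfiesRels4Three p k d (PresentedGroup.of (rels := rels4Three p k d) Gen4.J)
      (PresentedGroup.of Gen4.P) (PresentedGroup.of Gen4.R₁) (PresentedGroup.of Gen4.R₂) :=
    (lift_rels4Three_eq_one_iff PresentedGroup.of).1 fun _ => PresentedGroup.lift_of_eq_one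
  let φ := PresentedGroup.toGroup (rels := rels4Three p k d)
    (f := fun | .J => j | .P => r * (j * r * j⁻¹) | .R₁ => r | .R₂ => j * r * j⁻¹)
    ((lift_rels4Three_eq_one_iff _).2 ((satisfiesRels4Three_iff hp.ne').2 h₂))
  let ψ := PresentedGroup.toGroup (rels := relsThree p k d)
    (f := fun | .J => PresentedGroup.of (rels := rels4Three p k d) Gen4.J
              | .R => PresentedGroup.of Gen4.R₁)
    ((lift_relsThree_eq_one_iff _).2 (h₄.satisfiesRelsThree hp.ne'))
  refine ⟨φ.toMulEquiv ψ (PresentedGroup.ext ?_) (PresentedGroup.ext ?_), rfl, rfl, rfl, rfl⟩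
  · rintro (_ | _ | _ | _) <;>
      simp [φ, ψ, j, r, PresentedGroup.toGroup.of, h₄.q_eq, h₄.r₂_eq_conj_j]
  · rintro (_ | _) <;> rfl

/-- The four-generator presentation of a type three 3-fold Deligne-Mostow lattice is isomorphic to
its two-generator presentation, via `J ↦ J`, `R₁ ↦ R₁`, `R₂ ↦ JR₁J⁻¹`, `P ↦ R₁·(JR₁J⁻¹)`. -/
theorem typeThree_presentations_isomorphic (p k d : ℕ) (hp : 0 < p) (hk : 0 < k) (hd : 0 < d)
    (hpd : (1 : ℚ) / d = 1 / 2 - 3 / p) :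
    letI rels4 := rels4Three p k d
    letI rels2 := relsThree p k d
    ∃ e : PresentedGroup rels4 ≃* PresentedGroup rels2,
      e (PresentedGroup.of Gen4.J) = PresentedGroup.of Gen2.J ∧
      e (PresentedGroup.of Gen4.R₁) = PresentedGroup.of Gen2.R ∧
      e (PresentedGroup.of Gen4.R₂) =
        PresentedGroup.of Gen2.J * PresentedGroup.of Gen2.R * (PresentedGroup.of Gen2.J)⁻¹ ∧
      e (PresentedGroup.of Gen4.P) =
        PresentedGroup.of Gen2.R * (PresentedGroup.of Gen2.J * PresentedGroup.of Gen2.R * (PresentedGroup.of Gen2.J)⁻¹) :=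
  typeThree_presentations_isomorphic_general p k d hp
end
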